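/- In the quasi-shuffle Hopf algebra QS(A), for any nonempty pure tensor 𝐚 = a_1⊗...⊗a_n the identity (−1)^n · sum_{L ⊨ n} L∘𝐚^r = sum_{i=0}^{n−1} (−1)^{i+1} (sum_{L ⊨ i} L∘(a_i⊗a_{i−1}⊗...⊗a_1)) * (a_{i+1}⊗...⊗a_n) holds, where ⊨ denotes compositions and * the quasi-shuffle product. -/

import Mathlib

open TensorAlgebra in
/-- The pure tensor `a_1 ⊗ ⋯ ⊗ a_n ∈ T(A)`, realized inside the tensor algebra
as the concatenation product `ι a_1 ⋯ ι a_n`. -/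
noncomputable def pureTensor (k : Type*) {A : Type*} [CommRing k] [CommRing A]
    [Algebra k A] (b : List A) : TensorAlgebra k A :=
  (b.map fun a => TensorAlgebra.ι k a).prod

/-- Compositions of `n`: lists of positive integers with sum `n`. -/
def Comps (n : ℕ) : Set (List ℕ) := {L | (∀ l ∈ L, 0 < l) ∧ L.sum = n}

/-- `L ∘ 𝐛`: merge consecutive blocks of `𝐛` of sizes given by `L`, multiplying
the entries of each block in `A`. -/
def blocksMul {A : Type*} [CommRing A] : List ℕ → List A → List A
  | [], _ => []
  | l :: L, b => (b.take l).prod :: blocksMul L (b.drop l)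

/-!
Write `T_j = ∑_{L ⊨ j} L∘(a_j ⊗ ⋯ ⊗ a_1)` and `P_i = a_{i+1} ⊗ ⋯ ⊗ a_n`. Splitting off the first
block of a composition gives `T_j = ∑_{m<j} (a_{m+1}⋯a_j) T_m`. Feeding this and
`P_j = a_{j+1} P_{j+1}` into the defining recursion of the quasi-shuffle product yields
`T_j * P_j = D_j + D_{j+1}` with `D_j = ∑_{m<j} (a_{m+1}⋯a_j) (T_m * P_j)`, so the alternating sum
`∑_{i<n} (-1)^{i+1} T_i * P_i` telescopes to `(-1)^n D_n`, and `D_n = T_n` because `P_n = 1`.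
-/

lemma comps_zero : Comps 0 = {[]} := by
  ext L
  cases L with
  | nil => simp [Comps]
  | cons l L =>
    refine iff_of_false (fun ⟨hpos, hsum⟩ => ?_) (by simp)
    have := hpos l List.mem_cons_self
    rw [List.sum_cons] at hsum
    omega

lemma comps_succ (n : ℕ) :
    Comps (n + 1) = ⋃ m ∈ Set.Iio (n + 1), List.cons (n + 1 - m) '' Comps m := by
  ext L
  simp only [Comps, Set.mem_ofPred_eq, Set.mem_iUnion, Set.mem_image, Set.mem_Iio]
  constructor
  · rintro ⟨hpos, hsum⟩
    cases L with
    | nil => simp at hsum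
    | cons l L =>
      have hl := hpos l List.mem_cons_self
      rw [List.sum_cons] at hsum
      exact ⟨L.sum, by omega, L, ⟨fun x hx => hpos x (List.mem_cons_of_mem l hx), rfl⟩,
        by rw [← hsum, Nat.add_sub_cancel]⟩
  · rintro ⟨m, hm, L, ⟨hpos, rfl⟩, rfl⟩
    refine ⟨?_, by rw [List.sum_cons]; omega⟩
    simp only [List.mem_cons, forall_eq_or_imp]
    exact ⟨by omega, hpos⟩

lemma finite_comps (n : ℕ) : (Comps n).Finite :=
  (Set.finite_range (Composition.blocks : Composition n → List ℕ)).subset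
    fun L ⟨hpos, hsum⟩ => ⟨⟨L, hpos _, hsum⟩, rfl⟩

lemma finsum_mem_comps_succ {M : Type*} [AddCommMonoid M] (f : List ℕ → M) (n : ℕ) :
    ∑ᶠ L ∈ Comps (n + 1), f L =
      ∑ m ∈ Finset.range (n + 1), ∑ᶠ L ∈ Comps m, f ((n + 1 - m) :: L) := by
  rw [comps_succ, finsum_mem_biUnion, ← Finset.coe_range, finsum_mem_coe_finset]
  · exact Finset.sum_congr rfl fun m _ => finsum_mem_image List.cons_injective.injOn
  · intro m₁ hm₁ m₂ hm₂ hne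
    refine Set.disjoint_left.mpr ?_
    rintro _ ⟨L, -, rfl⟩ ⟨L', -, h⟩
    have := (List.cons_eq_cons.mp h).1
    simp only [Set.mem_Iio] at hm₁ hm₂
    omega
  · exact Set.finite_Iio _
  · exact fun m _ => (finite_comps m).image _

section
variable (k : Type*) {A : Type*} [CommRing k] [CommRing A] [Algebra k A]

open TensorAlgebra

lemma pureTensor_nil : pureTensor k ([] : List A) = 1 := rfl

lemma pureTensor_cons (x : A) (b : List A) :
    pureTensor k (x :: b) = ι k x * pureTensor k b := rfl

noncomputable def compSum (n : ℕ) (b : List A) : TensorAlgebra k A :=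
  ∑ᶠ L ∈ Comps n, pureTensor k (blocksMul L b)

lemma compSum_zero (b : List A) : compSum k 0 b = 1 := by
  rw [compSum, comps_zero, finsum_mem_singleton]
  rfl

lemma compSum_succ (n : ℕ) (b : List A) :
    compSum k (n + 1) b = ∑ m ∈ Finset.range (n + 1),
      ι k (b.take (n + 1 - m)).prod * compSum k m (b.drop (n + 1 - m)) := by
  rw [compSum, finsum_mem_comps_succ]
  exact Finset.sum_congr rfl fun m _ => (mul_finsum_mem' _ _ (finite_comps m)).symm


variable {k} (a : List A)

def segProd (m j : ℕ) : A := ((a.take j).drop m).prod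

lemma segProd_succ {m j : ℕ} (hm : m ≤ j) (hj : j < a.length) :
    segProd a m (j + 1) = segProd a m j * a[j] := by
  rw [segProd, segProd, List.take_add_one, List.getElem?_eq_getElem hj, Option.toList_some,
    List.drop_append_of_le_length (by simp; omega), List.prod_append,
    List.prod_singleton]

lemma segProd_self {j : ℕ} (hj : j < a.length) : segProd a j (j + 1) = a[j] := by
  rw [segProd_succ a le_rfl hj, segProd, List.drop_take_self, List.prod_nil, one_mul]

lemma pureTensor_drop {i : ℕ} (hi : i < a.length) :
    pureTensor k (a.drop i) = ι k a[i] * pureTensor k (a.drop (i + 1)) := by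
  rw [List.drop_eq_getElem_cons hi, pureTensor_cons]

variable (k)

noncomputable def revCompSum (j : ℕ) : TensorAlgebra k A := compSum k j (a.take j).reverse

lemma revCompSum_zero : revCompSum k a 0 = 1 := compSum_zero k _

lemma revCompSum_succ {j : ℕ} (hj : j < a.length) :
    revCompSum k a (j + 1) = ∑ m ∈ Finset.range (j + 1),
      ι k (segProd a m (j + 1)) * revCompSum k a m := by
  rw [revCompSum, compSum_succ]
  refine Finset.sum_congr rfl fun m hm => ?_
  have hlen : (a.take (j + 1)).length = j + 1 := List.length_take_of_le hj
  have hm : m ≤ j + 1 := (Finset.mem_range.mp hm).le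
  rw [List.take_reverse, List.drop_reverse, List.prod_reverse, hlen, Nat.sub_sub_self hm,
    List.take_take, min_eq_left hm, revCompSum, segProd]

end

section
variable {k A : Type*} [CommRing k] [CommRing A] [Algebra k A]
  (mqs : TensorAlgebra k A →ₗ[k] TensorAlgebra k A →ₗ[k] TensorAlgebra k A) (a : List A)

open TensorAlgebra

noncomputable def telescopeTerm (j : ℕ) : TensorAlgebra k A :=
  ∑ m ∈ Finset.range j, ι k (segProd a m j) * mqs (revCompSum k a m) (pureTensor k (a.drop j))

lemma mqs_revCompSum_pureTensor_drop (hleft : ∀ x, mqs 1 x = x)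
    (hrec : ∀ (x y : A) (u v : TensorAlgebra k A),
      mqs (ι k x * u) (ι k y * v) =
        ι k x * mqs u (ι k y * v) + ι k y * mqs (ι k x * u) v + ι k (x * y) * mqs u v)
    {j : ℕ} (hj : j < a.length) :
    mqs (revCompSum k a j) (pureTensor k (a.drop j)) =
      telescopeTerm mqs a j + telescopeTerm mqs a (j + 1) := by
  cases j with
  | zero =>
    rw [telescopeTerm, telescopeTerm, Finset.sum_range_zero, zero_add, Finset.sum_range_one,
      segProd_self a hj, revCompSum_zero, hleft, hleft, pureTensor_drop a hj]
  | succ j =>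
    have hj' : j < a.length := by omega
    have hterm : ∀ m ∈ Finset.range (j + 1),
        mqs (ι k (segProd a m (j + 1)) * revCompSum k a m) (pureTensor k (a.drop (j + 1))) =
          ι k (segProd a m (j + 1)) * mqs (revCompSum k a m) (pureTensor k (a.drop (j + 1))) +
          ι k a[j + 1] * mqs (ι k (segProd a m (j + 1)) * revCompSum k a m)
            (pureTensor k (a.drop (j + 2))) +
          ι k (segProd a m (j + 2)) * mqs (revCompSum k a m) (pureTensor k (a.drop (j + 2))) := by
      intro m hm
      rw [pureTensor_drop a hj, hrec, ← pureTensor_drop a hj,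
        ← segProd_succ a (Finset.mem_range.mp hm).le hj]
    rw [revCompSum_succ k a hj', map_sum, LinearMap.sum_apply, Finset.sum_congr rfl hterm,
      Finset.sum_add_distrib, Finset.sum_add_distrib, ← Finset.mul_sum, ← LinearMap.sum_apply,
      ← map_sum, ← revCompSum_succ k a hj', ← segProd_self a hj, telescopeTerm, telescopeTerm,
      Finset.sum_range_succ _ (j + 1)]
    abel

lemma sum_range_neg_one_pow_smul_mqs (hleft : ∀ x, mqs 1 x = x)
    (hrec : ∀ (x y : A) (u v : TensorAlgebra k A),
      mqs (ι k x * u) (ι k y * v) =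
        ι k x * mqs u (ι k y * v) + ι k y * mqs (ι k x * u) v + ι k (x * y) * mqs u v)
    {j : ℕ} (hj : j ≤ a.length) :
    ∑ i ∈ Finset.range j, ((-1 : ℤ) ^ (i + 1)) • mqs (revCompSum k a i) (pureTensor k (a.drop i)) =
      ((-1 : ℤ) ^ j) • telescopeTerm mqs a j := by
  induction j with
  | zero => simp [telescopeTerm]
  | succ j ih =>
    rw [Finset.sum_range_succ, ih (by omega),
      mqs_revCompSum_pureTensor_drop mqs a hleft hrec (by omega), pow_succ, mul_neg_one,
      neg_smul, neg_smul, smul_add]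
    abel

lemma telescopeTerm_length (hright : ∀ x, mqs x 1 = x) (ha : a ≠ []) :
    telescopeTerm mqs a a.length = revCompSum k a a.length := by
  obtain ⟨n, hn⟩ : ∃ n, a.length = n + 1 := Nat.exists_eq_succ_of_ne_zero (by simpa using ha)
  rw [telescopeTerm, List.drop_length, pureTensor_nil, hn, revCompSum_succ k a (by omega)]
  simp only [hright]

end

theorem stmt9_general {k A : Type*} [CommRing k] [CommRing A] [Algebra k A]
    (mqs : TensorAlgebra k A →ₗ[k] TensorAlgebra k A →ₗ[k] TensorAlgebra k A)
    (hleft : ∀ x : TensorAlgebra k A, mqs 1 x = x)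
    (hright : ∀ x : TensorAlgebra k A, mqs x 1 = x)
    (hrec : ∀ (a b : A) (x y : TensorAlgebra k A),
      mqs (TensorAlgebra.ι k a * x) (TensorAlgebra.ι k b * y) =
        TensorAlgebra.ι k a * mqs x (TensorAlgebra.ι k b * y) +
          TensorAlgebra.ι k b * mqs (TensorAlgebra.ι k a * x) y +
          TensorAlgebra.ι k (a * b) * mqs x y)
    (a : List A) (ha : a ≠ []) :
    ((-1 : ℤ) ^ a.length) •
        ∑ᶠ L ∈ Comps a.length, pureTensor k (blocksMul L a.reverse) =
      ∑ i ∈ Finset.range a.length, ((-1 : ℤ) ^ (i + 1)) •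
        mqs (∑ᶠ L ∈ Comps i, pureTensor k (blocksMul L (a.take i).reverse))
          (pureTensor k (a.drop i)) := by
  have h := sum_range_neg_one_pow_smul_mqs mqs a hleft hrec le_rfl
  rw [telescopeTerm_length mqs a hright ha, revCompSum, List.take_length] at h
  exact h.symm

/-- in the quasi-shuffle algebra `QS(A)`, for a nonempty pure
tensor `𝐚 = a_1 ⊗ ⋯ ⊗ a_n` one has
`(−1)^n ∑_{L ⊨ n} L∘𝐚^r = ∑_{i=0}^{n−1} (−1)^{i+1} (∑_{L ⊨ i} L∘(a_i⊗…⊗a_1)) * (a_{i+1}⊗…⊗a_n)`. -/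
theorem stmt9 {k A : Type*} [CommRing k] [CommRing A] [Algebra k A] [Algebra ℚ k]
    (mqs : TensorAlgebra k A →ₗ[k] TensorAlgebra k A →ₗ[k] TensorAlgebra k A)
    (hleft : ∀ x : TensorAlgebra k A, mqs 1 x = x)
    (hright : ∀ x : TensorAlgebra k A, mqs x 1 = x)
    (hrec : ∀ (a b : A) (x y : TensorAlgebra k A),
      mqs (TensorAlgebra.ι k a * x) (TensorAlgebra.ι k b * y) =
        TensorAlgebra.ι k a * mqs x (TensorAlgebra.ι k b * y) +
          TensorAlgebra.ι k b * mqs (TensorAlgebra.ι k a * x) y +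
          TensorAlgebra.ι k (a * b) * mqs x y)
    (a : List A) (ha : a ≠ []) :
    ((-1 : ℤ) ^ a.length) •
        ∑ᶠ L ∈ Comps a.length, pureTensor k (blocksMul L a.reverse) =
      ∑ i ∈ Finset.range a.length, ((-1 : ℤ) ^ (i + 1)) •
        mqs (∑ᶠ L ∈ Comps i, pureTensor k (blocksMul L (a.take i).reverse))
          (pureTensor k (a.drop i)) :=
  stmt9_general mqs hleft hright hrec a ha
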